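/- arXiv:1105.2927 — 2 statements merged into one kernel-verified Lean document; each statement's English description precedes it below -/
import Mathlib

section
/- Fix k ≥ 1, integers i, j with i + j ≤ k, nonincreasing integers N_{1,1} ≥ ... ≥ N_{1,k} ≥ 0 (convention N_{1,k+1} = 0) and nondecreasing integers 0 ≤ N_{2,1} ≤ ... ≤ N_{2,k} (convention N_{2,0} = 0). For a binary tuple p define l^1_p(q) = q^{∑ p_m N_{1,m}}, δ^1_p(q) = ∏_{m=1}^k (1 - [p_m=0, p_{m+1}=1] q^{N_{1,m}-N_{1,m+1}}) with p_{k+1}=0, l^2_p(q) = q^{∑ p_m N_{2,m}}, δ^2_p(q) = ∏_{m=1}^k (1 - [p_m=0, p_{m-1}=1] q^{N_{2,m}-N_{2,m-1}}) with p_0=0. Let g_i^1(p) change the last i ones of p into zeros and g_i^0(p) change the last i zeros of p into ones. Then ∑_{p with exactly i+j ones} l^1_p(q) δ^1_p(q) l^2_{g_i^1(p)}(q) = ∑_{p' with exactly j ones} l^1_{g_i^0(p')}(q) l^2_{p'}(q) δ^2_{p'}(q). -/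
open Finset Polynomial

/-- Value of a binary `k`-tuple at 1-based position `i`, with value `0` outside `1..k`
(encoding the conventions `p₀ = 0` and `p_{k+1} = 0`). -/
def ext' (k : ℕ) (p : Fin k → Fin 2) (i : ℕ) : ℕ :=
  if h : 1 ≤ i ∧ i ≤ k then (p ⟨i - 1, by omega⟩ : ℕ) else 0

/-- Number of ones of a binary tuple. -/
def onesCount (k : ℕ) (p : Fin k → Fin 2) : ℕ := ∑ i : Fin k, (p i : ℕ)

/-- The partial order: `p1 ≤ p2` iff every initial partial sum of `p1` is ≥ that of `p2`. -/
def tle (k : ℕ) (p1 p2 : Fin k → Fin 2) : Prop :=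
  ∀ j ∈ Finset.Icc 1 k,
    ∑ i ∈ Finset.Icc 1 j, ext' k p2 i ≤ ∑ i ∈ Finset.Icc 1 j, ext' k p1 i

instance (k : ℕ) (p1 p2 : Fin k → Fin 2) : Decidable (tle k p1 p2) := by
  unfold tle; infer_instance

/-- `l_p(q) = q^{∑ p_i N_i}` as a polynomial in `q = X` over `ℤ`. -/
noncomputable def lTerm (k : ℕ) (N : ℕ → ℕ) (p : Fin k → Fin 2) : Polynomial ℤ :=
  Polynomial.X ^ (∑ i ∈ Finset.Icc 1 k, ext' k p i * N i)

/-- `δ¹_p(q)`: factors read from the right neighbour, convention `p_{k+1} = 0`. -/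
noncomputable def deltaR (k : ℕ) (N : ℕ → ℕ) (p : Fin k → Fin 2) : Polynomial ℤ :=
  ∏ i ∈ Finset.Icc 1 k,
    (1 - if ext' k p i = 0 ∧ ext' k p (i + 1) = 1
         then Polynomial.X ^ (N i - N (i + 1)) else 0)

/-- `δ²_p(q)`: factors read from the left neighbour, conventions `p₀ = 0`, `N₀ = 0`. -/
noncomputable def deltaL (k : ℕ) (N : ℕ → ℕ) (p : Fin k → Fin 2) : Polynomial ℤ :=
  ∏ i ∈ Finset.Icc 1 k,
    (1 - if ext' k p i = 0 ∧ ext' k p (i - 1) = 1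
         then Polynomial.X ^ (N i - N (i - 1)) else 0)

/-- `g_i^1(p)`: change the last `i` ones of `p` (largest positions) into zeros. -/
def g1 (k i : ℕ) (p : Fin k → Fin 2) : Fin k → Fin 2 := fun m =>
  if p m = 1 ∧ (Finset.univ.filter (fun n => m ≤ n ∧ p n = 1)).card ≤ i then 0 else p m

/-- `g_i^0(p)`: change the last `i` zeros of `p` (largest positions) into ones. -/
def g0 (k i : ℕ) (p : Fin k → Fin 2) : Fin k → Fin 2 := fun m =>
  if p m = 0 ∧ (Finset.univ.filter (fun n => m ≤ n ∧ p n = 0)).card ≤ i then 1 else p m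

/-- `f_i^1(p)`: change the first `i` ones of `p` (smallest positions) into zeros. -/
def f1 (k i : ℕ) (p : Fin k → Fin 2) : Fin k → Fin 2 := fun m =>
  if p m = 1 ∧ (Finset.univ.filter (fun n => n ≤ m ∧ p n = 1)).card ≤ i then 0 else p m

/-- `f_i^0(p)`: change the first `i` zeros of `p` (smallest positions) into ones. -/
def f0 (k i : ℕ) (p : Fin k → Fin 2) : Fin k → Fin 2 := fun m =>
  if p m = 0 ∧ (Finset.univ.filter (fun n => n ≤ m ∧ p n = 0)).card ≤ i then 1 else p m

/-- Coordinatewise complement of a binary tuple. -/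
def compl' (k : ℕ) (p : Fin k → Fin 2) : Fin k → Fin 2 := fun m => 1 - p m

/-- 1-based position of the `j`-th one of `p`. -/
noncomputable def pos1 (k j : ℕ) (p : Fin k → Fin 2) : ℕ :=
  sInf {m | ext' k p m = 1 ∧ ∑ i ∈ Finset.Icc 1 m, ext' k p i = j}

/-- 1-based position of the `j`-th zero of `p`. -/
noncomputable def pos0 (k j : ℕ) (p : Fin k → Fin 2) : ℕ :=
  sInf {m | 1 ≤ m ∧ m ≤ k ∧ ext' k p m = 0 ∧
    ∑ i ∈ Finset.Icc 1 m, (1 - ext' k p i) = j}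

open Matrix

/-! Both sides satisfy the same three-term recursion in `k`, obtained by splitting off the first
entry of the tuple. A leading one contributes `q^(N₁(1) + N₂(1))`. A leading `01` on the left
(through `δ¹`), resp. a leading `10` on the right (through `δ²`), contributes a correction over
tuples two entries shorter, with coefficient `q^(N₁(1) - N₁(2)) q^(N₁(2) + N₂(2))`, resp.
`q^(N₁(1) + N₂(1)) q^(N₂(2) - N₂(1))`; both equal `q^(N₁(1) + N₂(2))` because `N₁` decreases and
`N₂` increases. The boundary cases `j = 0` and `i + j = k` are the telescoping identities
`∑_{|p| = w} l¹_p δ¹_p = q^(N₁(k-w+1) + ⋯ + N₁(k))` and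
`∑_{|p| = w} l²_p δ²_p = q^(N₂(1) + ⋯ + N₂(w))`, proved by the same recursion. -/

def shift (N : ℕ → ℕ) : ℕ → ℕ := fun m => N (m + 1)

lemma shift_step_antitone {N : ℕ → ℕ} {k : ℕ} (hN : ∀ m, 1 ≤ m → m < k + 1 → N (m + 1) ≤ N m) :
    ∀ m, 1 ≤ m → m < k → shift N (m + 1) ≤ shift N m :=
  fun m h1 h2 => hN (m + 1) (by omega) (by omega)

lemma shift_step_monotone {N : ℕ → ℕ} {k : ℕ} (hN : ∀ m, 1 ≤ m → m < k + 1 → N m ≤ N (m + 1)) :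
    ∀ m, 1 ≤ m → m < k → shift N m ≤ shift N (m + 1) :=
  fun m h1 h2 => hN (m + 1) (by omega) (by omega)

namespace Finset

lemma prod_Icc_one_succ {M : Type*} [CommMonoid M] (f : ℕ → M) (n : ℕ) :
    ∏ m ∈ Icc 1 (n + 1), f m = f 1 * ∏ m ∈ Icc 1 n, f (m + 1) := by
  rw [← insert_Icc_add_one_left_eq_Icc (by omega), prod_insert (by simp), ← map_add_right_Icc,
    prod_map]
  rfl

lemma sum_Icc_one_succ {M : Type*} [AddCommMonoid M] (f : ℕ → M) (n : ℕ) :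
    ∑ m ∈ Icc 1 (n + 1), f m = f 1 + ∑ m ∈ Icc 1 n, f (m + 1) :=
  prod_Icc_one_succ (M := Multiplicative M) f n

end Finset

lemma Fin.cons_const {α : Type*} {n : ℕ} (c : α) :
    (Fin.cons c (fun _ : Fin n => c) : Fin (n + 1) → α) = fun _ => c :=
  Fin.cons_self_tail (fun _ : Fin (n + 1) => c)

lemma Fin.val_eq_one_iff_eq_one {x : Fin 2} : (x : ℕ) = 1 ↔ x = 1 :=
  (Fin.ext_iff (b := 1)).symm

section Tuples

variable {n : ℕ}

lemma ext'_zero (k : ℕ) (p : Fin k → Fin 2) : ext' k p 0 = 0 := by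
  simp [ext']

lemma ext'_one (p : Fin (n + 1) → Fin 2) : ext' (n + 1) p 1 = p 0 := by
  simp [ext']

lemma ext'_cons_succ (a : Fin 2) (t : Fin n → Fin 2) {m : ℕ} (hm : 1 ≤ m) :
    ext' (n + 1) (Fin.cons a t) (m + 1) = ext' n t m := by
  unfold ext'
  by_cases h : m ≤ n
  · rw [dif_pos ⟨by omega, by omega⟩, dif_pos ⟨hm, h⟩]
    obtain ⟨m, rfl⟩ : ∃ m', m = m' + 1 := ⟨m - 1, by omega⟩
    exact congrArg _ (Fin.cons_succ (α := fun _ => Fin 2) a t ⟨m, by omega⟩)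
  · rw [dif_neg (by omega), dif_neg (by omega)]

lemma onesCount_cons (a : Fin 2) (t : Fin n → Fin 2) :
    onesCount (n + 1) (Fin.cons a t) = a + onesCount n t := by
  simp [onesCount, Fin.sum_univ_succ]

lemma onesCount_le (k : ℕ) (p : Fin k → Fin 2) : onesCount k p ≤ k := by
  simpa [onesCount] using sum_le_sum fun x (_ : x ∈ univ) => Nat.le_of_lt_succ (p x).isLt

lemma onesCount_eq_zero_iff {k : ℕ} {p : Fin k → Fin 2} :
    onesCount k p = 0 ↔ p = fun _ => 0 := by
  simp only [onesCount, Finset.sum_eq_zero_iff, mem_univ, true_implies, funext_iff]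
  exact forall_congr' fun x => Fin.val_eq_zero_iff

lemma onesCount_eq_self_iff {k : ℕ} {p : Fin k → Fin 2} :
    onesCount k p = k ↔ p = fun _ => 1 := by
  have hle : ∀ x ∈ (univ : Finset (Fin k)), (p x : ℕ) ≤ 1 := fun x _ => Nat.le_of_lt_succ (p x).isLt
  have := Finset.sum_eq_sum_iff_of_le hle
  simp only [sum_const, card_univ, Fintype.card_fin, smul_eq_mul, mul_one, mem_univ,
    true_implies] at this
  simp [onesCount, this, funext_iff, Fin.ext_iff]

lemma onesCount_zero (k : ℕ) : onesCount k (fun _ => 0) = 0 := onesCount_eq_zero_iff.mpr rfl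

lemma onesCount_one (k : ℕ) : onesCount k (fun _ => 1) = k := onesCount_eq_self_iff.mpr rfl

lemma card_filter_eq_one (k : ℕ) (p : Fin k → Fin 2) :
    #{x | p x = 1} = onesCount k p := by
  rw [card_filter]
  exact sum_congr rfl fun x _ => by rcases Fin.exists_fin_two.mp ⟨p x, rfl⟩ with h | h <;> simp [h]

end Tuples

section Weights

variable {n : ℕ} (N : ℕ → ℕ)

lemma lTerm_cons (a : Fin 2) (t : Fin n → Fin 2) :
    lTerm (n + 1) N (Fin.cons a t) = X ^ ((a : ℕ) * N 1) * lTerm n (shift N) t := by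
  rw [lTerm, lTerm, sum_Icc_one_succ, pow_add, ext'_one, Fin.cons_zero]
  congr 2
  exact sum_congr rfl fun m hm => by rw [ext'_cons_succ a t (mem_Icc.mp hm).1]; rfl

lemma deltaR_cons (a : Fin 2) (t : Fin n → Fin 2) :
    deltaR (n + 1) N (Fin.cons a t) =
      (1 - if (a : ℕ) = 0 ∧ ext' n t 1 = 1 then X ^ (N 1 - N 2) else 0) *
        deltaR n (shift N) t := by
  rw [deltaR, deltaR, prod_Icc_one_succ, ext'_one, Fin.cons_zero, ext'_cons_succ a t le_rfl]
  congr 1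
  refine prod_congr rfl fun m hm => ?_
  rw [ext'_cons_succ a t (mem_Icc.mp hm).1, ext'_cons_succ a t (by omega : 1 ≤ m + 1)]
  rfl

lemma deltaR_cons_one (t : Fin n → Fin 2) :
    deltaR (n + 1) N (Fin.cons 1 t) = deltaR n (shift N) t := by
  simp [deltaR_cons]

lemma deltaR_cons_zero (t : Fin (n + 1) → Fin 2) :
    deltaR (n + 2) N (Fin.cons 0 t) =
      (1 - if t 0 = 1 then X ^ (N 1 - N 2) else 0) * deltaR (n + 1) (shift N) t := by
  simp [deltaR_cons, ext'_one, Fin.val_eq_one_iff_eq_one]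

lemma deltaL_cons (a : Fin 2) (t : Fin (n + 1) → Fin 2) :
    deltaL (n + 2) N (Fin.cons a t) =
      (1 - if t 0 = 0 ∧ a = 1 then X ^ (N 2 - N 1) else 0) * deltaL (n + 1) (shift N) t := by
  rw [deltaL, deltaL, prod_Icc_one_succ, prod_Icc_one_succ, prod_Icc_one_succ (n := n)]
  simp only [Nat.sub_self, Nat.add_sub_cancel, ext'_zero, zero_ne_one, and_false, if_false,
    sub_zero, one_mul, ext'_cons_succ a t le_rfl, ext'_one, Fin.cons_zero]
  congr 1
  · simp only [Fin.val_eq_zero_iff, Fin.val_eq_one_iff_eq_one]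
  refine prod_congr rfl fun m hm => ?_
  rw [ext'_cons_succ a t (by omega : 1 ≤ m + 1), ext'_cons_succ a t (mem_Icc.mp hm).1]
  rfl

lemma deltaL_cons_zero (t : Fin n → Fin 2) :
    deltaL (n + 1) N (Fin.cons 0 t) = deltaL n (shift N) t := by
  rcases n with _ | n
  · simp [deltaL, ext'_zero]
  · simp [deltaL_cons]

lemma deltaL_cons_one (t : Fin (n + 1) → Fin 2) :
    deltaL (n + 2) N (Fin.cons 1 t) =
      (1 - if t 0 = 0 then X ^ (N 2 - N 1) else 0) * deltaL (n + 1) (shift N) t := by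
  simp [deltaL_cons]

end Weights

section Constant

variable (k : ℕ) (N : ℕ → ℕ)

lemma ext'_const (c : Fin 2) (m : ℕ) :
    ext' k (fun _ => c) m = if 1 ≤ m ∧ m ≤ k then (c : ℕ) else 0 := by
  unfold ext'; split_ifs <;> rfl

lemma lTerm_zero : lTerm k N (fun _ => 0) = 1 := by
  simp [lTerm, ext'_const]

lemma deltaR_const (c : Fin 2) : deltaR k N (fun _ => c) = 1 :=
  prod_eq_one fun m _ => by
    fin_cases c <;> simp only [ext'_const] <;> split_ifs <;> simp_all

lemma deltaL_const (c : Fin 2) : deltaL k N (fun _ => c) = 1 :=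
  prod_eq_one fun m _ => by
    fin_cases c <;> simp only [ext'_const] <;> split_ifs <;> simp_all

end Constant

section Flips

variable {n k : ℕ} (i : ℕ)

lemma card_filter_eq_zero_add_onesCount (p : Fin k → Fin 2) :
    #{x | p x = 0} + onesCount k p = k := by
  rw [← card_filter_eq_one, ← card_union_of_disjoint (disjoint_filter.mpr fun x _ h => by simp [h]),
    ← filter_or, filter_true_of_mem fun x _ => Fin.exists_fin_two.mp ⟨p x, rfl⟩, card_univ,
    Fintype.card_fin]

lemma card_filter_succ_le (p : Fin (n + 1) → Fin 2) (m : Fin n) (c : Fin 2) :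
    #{x | m.succ ≤ x ∧ p x = c} = #{x | m ≤ x ∧ Fin.tail p x = c} := by
  rw [Fin.card_filter_univ_succ']
  simp only [Fin.succ_ne_zero, Fin.le_zero_iff, false_and, if_false, zero_add,
    Fin.succ_le_succ_iff]
  rfl

lemma g1_succ (p : Fin (n + 1) → Fin 2) (m : Fin n) :
    g1 (n + 1) i p m.succ = g1 n i (Fin.tail p) m := by
  simp only [g1, card_filter_succ_le]; rfl

lemma g0_succ (p : Fin (n + 1) → Fin 2) (m : Fin n) :
    g0 (n + 1) i p m.succ = g0 n i (Fin.tail p) m := by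
  simp only [g0, card_filter_succ_le]; rfl

lemma g1_cons_zero (t : Fin n → Fin 2) : g1 (n + 1) i (Fin.cons 0 t) = Fin.cons 0 (g1 n i t) := by
  ext m
  induction m using Fin.cases with
  | zero => simp [g1]
  | succ m => rw [g1_succ, Fin.tail_cons, Fin.cons_succ]

lemma g1_cons_one (t : Fin n → Fin 2) (h : i ≤ onesCount n t) :
    g1 (n + 1) i (Fin.cons 1 t) = Fin.cons 1 (g1 n i t) := by
  ext m
  induction m using Fin.cases with
  | zero =>
    have : i < #{x | (Fin.cons 1 t : Fin (n + 1) → Fin 2) x = 1} := by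
      rw [card_filter_eq_one, onesCount_cons, Fin.val_one]
      omega
    simp [g1, this.not_ge]
  | succ m => rw [g1_succ, Fin.tail_cons, Fin.cons_succ]

lemma g0_cons_one (t : Fin n → Fin 2) : g0 (n + 1) i (Fin.cons 1 t) = Fin.cons 1 (g0 n i t) := by
  ext m
  induction m using Fin.cases with
  | zero => simp [g0]
  | succ m => rw [g0_succ, Fin.tail_cons, Fin.cons_succ]

lemma g0_cons_zero (t : Fin n → Fin 2) (h : i + onesCount n t ≤ n) :
    g0 (n + 1) i (Fin.cons 0 t) = Fin.cons 0 (g0 n i t) := by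
  ext m
  induction m using Fin.cases with
  | zero =>
    have : i < #{x | (Fin.cons 0 t : Fin (n + 1) → Fin 2) x = 0} := by
      have := card_filter_eq_zero_add_onesCount (Fin.cons 0 t : Fin (n + 1) → Fin 2)
      rw [onesCount_cons, Fin.val_zero, zero_add] at this
      omega
    simp [g0, this.not_ge]
  | succ m => rw [g0_succ, Fin.tail_cons, Fin.cons_succ]

lemma g1_zero_left (p : Fin k → Fin 2) : g1 k 0 p = p := by
  ext m
  by_cases hm : p m = 1
  · have : 0 < #{x | m ≤ x ∧ p x = 1} := card_pos.mpr ⟨m, by simp [hm]⟩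
    simp [g1, hm, this.ne']
  · simp [g1, hm]

lemma g0_zero_left (p : Fin k → Fin 2) : g0 k 0 p = p := by
  ext m
  by_cases hm : p m = 0
  · have : 0 < #{x | m ≤ x ∧ p x = 0} := card_pos.mpr ⟨m, by simp [hm]⟩
    simp [g0, hm, this.ne']
  · simp [g0, hm]

lemma g1_eq_zero_of_onesCount_le (p : Fin k → Fin 2) (h : onesCount k p ≤ i) :
    g1 k i p = fun _ => 0 := by
  ext m
  have : #{x | m ≤ x ∧ p x = 1} ≤ i :=
    (card_le_card (monotone_filter_right _ fun _ _ hx => hx.2)).trans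
      ((card_filter_eq_one k p).trans_le h)
  rcases Fin.exists_fin_two.mp ⟨p m, rfl⟩ with hm | hm <;> simp [g1, hm, this]

lemma g0_eq_one_of_le (p : Fin k → Fin 2) (h : k ≤ i + onesCount k p) :
    g0 k i p = fun _ => 1 := by
  ext m
  have : #{x | m ≤ x ∧ p x = 0} ≤ i :=
    (card_le_card (monotone_filter_right _ fun _ _ hx => hx.2)).trans
      (by have := card_filter_eq_zero_add_onesCount p; omega)
  rcases Fin.exists_fin_two.mp ⟨p m, rfl⟩ with hm | hm <;> simp [g0, hm, this]

end Flips

section OnesSum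

variable {R : Type*} [AddCommMonoid R] {n k : ℕ}

def onesSum (k w : ℕ) (F : (Fin k → Fin 2) → R) : R :=
  ∑ p ∈ univ.filter (fun p : Fin k → Fin 2 => onesCount k p = w), F p

lemma onesSum_congr {w : ℕ} {F G : (Fin k → Fin 2) → R} (h : ∀ p, onesCount k p = w → F p = G p) :
    onesSum k w F = onesSum k w G :=
  sum_congr rfl fun p hp => h p (mem_filter.mp hp).2

lemma onesSum_sub {A : Type*} [AddCommGroup A] {w : ℕ} (F G : (Fin k → Fin 2) → A) :
    onesSum k w (fun p => F p - G p) = onesSum k w F - onesSum k w G :=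
  sum_sub_distrib ..

lemma onesSum_mul_left {S : Type*} [NonUnitalNonAssocSemiring S] {w : ℕ} (c : S)
    (F : (Fin k → Fin 2) → S) : onesSum k w (fun p => c * F p) = c * onesSum k w F :=
  (mul_sum ..).symm

lemma onesSum_zero (F : (Fin k → Fin 2) → R) : onesSum k 0 F = F fun _ => 0 := by
  rw [onesSum, filter_congr fun p _ => onesCount_eq_zero_iff, filter_eq' univ, if_pos (mem_univ _),
    sum_singleton]

lemma onesSum_self (F : (Fin k → Fin 2) → R) : onesSum k k F = F fun _ => 1 := by
  rw [onesSum, filter_congr fun p _ => onesCount_eq_self_iff, filter_eq' univ, if_pos (mem_univ _),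
    sum_singleton]

lemma onesSum_succ (w : ℕ) (F : (Fin (n + 1) → Fin 2) → R) :
    onesSum (n + 1) w F = onesSum n w (fun t => F (Fin.cons 0 t)) +
      ∑ t ∈ univ.filter (fun t : Fin n → Fin 2 => onesCount n t + 1 = w), F (Fin.cons 1 t) := by
  simp only [onesSum, sum_filter]
  rw [← (Fin.consEquiv fun _ => Fin 2).sum_comp, Fintype.sum_prod_type, Fin.sum_univ_two]
  simp [Fin.consEquiv, onesCount_cons, add_comm]

lemma onesSum_succ_succ (w : ℕ) (F : (Fin (n + 1) → Fin 2) → R) :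
    onesSum (n + 1) (w + 1) F =
      onesSum n (w + 1) (fun t => F (Fin.cons 0 t)) + onesSum n w (fun t => F (Fin.cons 1 t)) := by
  simp only [onesSum_succ, Nat.add_right_cancel_iff]
  rfl

lemma onesSum_ite_head_zero (w : ℕ) (F : (Fin (n + 1) → Fin 2) → R) :
    onesSum (n + 1) w (fun p => if p 0 = 0 then F p else 0) =
      onesSum n w (fun t => F (Fin.cons 0 t)) := by
  simp [onesSum_succ]

lemma onesSum_ite_head_one (w : ℕ) (F : (Fin (n + 1) → Fin 2) → R) :
    onesSum (n + 1) (w + 1) (fun p => if p 0 = 1 then F p else 0) =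
      onesSum n w (fun t => F (Fin.cons 1 t)) := by
  rw [onesSum_succ_succ]
  simp [onesSum]

end OnesSum

noncomputable def deltaRSum (k w : ℕ) (N : ℕ → ℕ) : ℤ[X] :=
  onesSum k w fun p => lTerm k N p * deltaR k N p

section DeltaRSum

variable {n : ℕ} (N : ℕ → ℕ)

lemma lTerm_mul_deltaR_cons_one (t : Fin n → Fin 2) :
    lTerm (n + 1) N (Fin.cons 1 t) * deltaR (n + 1) N (Fin.cons 1 t) =
      X ^ N 1 * (lTerm n (shift N) t * deltaR n (shift N) t) := by
  rw [lTerm_cons, deltaR_cons_one, Fin.val_one, one_mul, mul_assoc]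

lemma lTerm_mul_deltaR_cons_zero (t : Fin (n + 1) → Fin 2) :
    lTerm (n + 2) N (Fin.cons 0 t) * deltaR (n + 2) N (Fin.cons 0 t) =
      lTerm (n + 1) (shift N) t * deltaR (n + 1) (shift N) t - X ^ (N 1 - N 2) *
        if t 0 = 1 then lTerm (n + 1) (shift N) t * deltaR (n + 1) (shift N) t else 0 := by
  rw [lTerm_cons, deltaR_cons_zero, Fin.val_zero, zero_mul, pow_zero, one_mul]
  split_ifs <;> ring

lemma deltaRSum_succ_succ (w : ℕ) :
    deltaRSum (n + 2) (w + 1) N =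
      deltaRSum (n + 1) (w + 1) (shift N) + X ^ N 1 * deltaRSum (n + 1) w (shift N) -
        X ^ (N 1 - N 2) * (X ^ N 2 * deltaRSum n w (shift (shift N))) := by
  rw [deltaRSum, onesSum_succ_succ]
  simp only [lTerm_mul_deltaR_cons_zero, lTerm_mul_deltaR_cons_one, onesSum_sub, onesSum_mul_left]
  rw [onesSum_ite_head_one]
  simp only [lTerm_mul_deltaR_cons_one, onesSum_mul_left]
  rw [deltaRSum, deltaRSum, deltaRSum, shift]
  ring

lemma lTerm_g0_zero_succ {w : ℕ} (h : w ≤ n) :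
    lTerm (n + 1) N (g0 (n + 1) w fun _ => 0) = lTerm n (shift N) (g0 n w fun _ => 0) := by
  rw [← Fin.cons_const, g0_cons_zero _ _ (by rw [onesCount_zero]; omega), lTerm_cons, Fin.val_zero,
    zero_mul, pow_zero, one_mul]

end DeltaRSum

-- `g0 k w 0` is the tuple whose last `w` entries are ones.
lemma deltaRSum_eq {k w : ℕ} {N : ℕ → ℕ} (hw : w ≤ k)
    (hN : ∀ m, 1 ≤ m → m < k → N (m + 1) ≤ N m) :
    deltaRSum k w N = lTerm k N (g0 k w fun _ => 0) := by
  induction k using Nat.strong_induction_on generalizing w N with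
  | _ k ih =>
  rcases Nat.eq_zero_or_pos w with rfl | hw0
  · rw [deltaRSum, onesSum_zero, deltaR_const, mul_one, g0_zero_left]
  rcases hw.eq_or_lt with rfl | hwk
  · rw [deltaRSum, onesSum_self, deltaR_const, mul_one, g0_eq_one_of_le _ _ (by omega)]
  obtain ⟨n, rfl⟩ : ∃ n, k = n + 2 := ⟨k - 2, by omega⟩
  obtain ⟨w, rfl⟩ : ∃ v, w = v + 1 := ⟨w - 1, by omega⟩
  have hN' := shift_step_antitone (k := n + 1) hN
  have hN'' := shift_step_antitone hN'
  rw [deltaRSum_succ_succ, ih (n + 1) (by omega) (by omega) hN',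
    ih (n + 1) (by omega) (by omega) hN', ih n (by omega) (by omega) hN'',
    lTerm_g0_zero_succ N (w := w + 1) (by omega),
    lTerm_g0_zero_succ (shift N) (w := w) (by omega), ← mul_assoc, ← pow_add,
    Nat.sub_add_cancel (hN 1 le_rfl (by omega))]
  ring

noncomputable def deltaLSum (k w : ℕ) (N : ℕ → ℕ) : ℤ[X] :=
  onesSum k w fun p => lTerm k N p * deltaL k N p

section DeltaLSum

variable {n : ℕ} (N : ℕ → ℕ)

lemma lTerm_mul_deltaL_cons_zero (t : Fin n → Fin 2) :
    lTerm (n + 1) N (Fin.cons 0 t) * deltaL (n + 1) N (Fin.cons 0 t) =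
      lTerm n (shift N) t * deltaL n (shift N) t := by
  rw [lTerm_cons, deltaL_cons_zero, Fin.val_zero, zero_mul, pow_zero, one_mul]

lemma lTerm_mul_deltaL_cons_one (t : Fin (n + 1) → Fin 2) :
    lTerm (n + 2) N (Fin.cons 1 t) * deltaL (n + 2) N (Fin.cons 1 t) =
      X ^ N 1 * (lTerm (n + 1) (shift N) t * deltaL (n + 1) (shift N) t - X ^ (N 2 - N 1) *
        if t 0 = 0 then lTerm (n + 1) (shift N) t * deltaL (n + 1) (shift N) t else 0) := by
  rw [lTerm_cons, deltaL_cons_one, Fin.val_one, one_mul]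
  split_ifs <;> ring

lemma deltaLSum_succ_succ (w : ℕ) :
    deltaLSum (n + 2) (w + 1) N =
      deltaLSum (n + 1) (w + 1) (shift N) + X ^ N 1 * deltaLSum (n + 1) w (shift N) -
        X ^ N 1 * X ^ (N 2 - N 1) * deltaLSum n w (shift (shift N)) := by
  rw [deltaLSum, onesSum_succ_succ]
  simp only [lTerm_mul_deltaL_cons_zero, lTerm_mul_deltaL_cons_one, onesSum_sub, onesSum_mul_left]
  rw [onesSum_ite_head_zero]
  simp only [lTerm_mul_deltaL_cons_zero]
  rw [deltaLSum, deltaLSum, deltaLSum]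
  ring

lemma lTerm_g1_one_succ {v : ℕ} (h : v ≤ n) :
    lTerm (n + 1) N (g1 (n + 1) v fun _ => 1) =
      X ^ N 1 * lTerm n (shift N) (g1 n v fun _ => 1) := by
  rw [← Fin.cons_const, g1_cons_one _ _ (by rw [onesCount_one]; omega), lTerm_cons, Fin.val_one,
    one_mul]

end DeltaLSum

-- `g1 k (k - w) 1` is the tuple whose first `w` entries are ones.
lemma deltaLSum_eq {k w : ℕ} {N : ℕ → ℕ} (hw : w ≤ k)
    (hN : ∀ m, 1 ≤ m → m < k → N m ≤ N (m + 1)) :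
    deltaLSum k w N = lTerm k N (g1 k (k - w) fun _ => 1) := by
  induction k using Nat.strong_induction_on generalizing w N with
  | _ k ih =>
  rcases Nat.eq_zero_or_pos w with rfl | hw0
  · rw [deltaLSum, onesSum_zero, deltaL_const, mul_one, Nat.sub_zero,
      g1_eq_zero_of_onesCount_le _ _ (onesCount_le _ _)]
  rcases hw.eq_or_lt with rfl | hwk
  · rw [deltaLSum, onesSum_self, deltaL_const, mul_one, Nat.sub_self, g1_zero_left]
  obtain ⟨n, rfl⟩ : ∃ n, k = n + 2 := ⟨k - 2, by omega⟩
  obtain ⟨w, rfl⟩ : ∃ v, w = v + 1 := ⟨w - 1, by omega⟩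
  have hN' := shift_step_monotone (k := n + 1) hN
  have hN'' := shift_step_monotone hN'
  rw [deltaLSum_succ_succ, ih (n + 1) (by omega) (by omega) hN',
    ih (n + 1) (by omega) (by omega) hN', ih n (by omega) (by omega) hN'',
    show n + 2 - (w + 1) = n + 1 - w by omega,
    show n + 1 - (w + 1) = n - w by omega, lTerm_g1_one_succ N (v := n + 1 - w) (by omega),
    lTerm_g1_one_succ (shift N) (v := n - w) (by omega), ← pow_add,
    Nat.add_sub_cancel' (hN 1 le_rfl (by omega)), shift]
  ring

noncomputable def lhsWeight (k : ℕ) (N1 N2 : ℕ → ℕ) (i : ℕ) (p : Fin k → Fin 2) : ℤ[X] :=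
  lTerm k N1 p * deltaR k N1 p * lTerm k N2 (g1 k i p)

noncomputable def rhsWeight (k : ℕ) (N1 N2 : ℕ → ℕ) (i : ℕ) (p : Fin k → Fin 2) : ℤ[X] :=
  lTerm k N1 (g0 k i p) * lTerm k N2 p * deltaL k N2 p

noncomputable def lhsSum (k : ℕ) (N1 N2 : ℕ → ℕ) (i j : ℕ) : ℤ[X] :=
  onesSum k (i + j) (lhsWeight k N1 N2 i)

noncomputable def rhsSum (k : ℕ) (N1 N2 : ℕ → ℕ) (i j : ℕ) : ℤ[X] :=
  onesSum k j (rhsWeight k N1 N2 i)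

section Interchange

variable {n : ℕ} (N1 N2 : ℕ → ℕ) (i : ℕ)

lemma lhsWeight_cons_one (t : Fin n → Fin 2) (h : i ≤ onesCount n t) :
    lhsWeight (n + 1) N1 N2 i (Fin.cons 1 t) =
      X ^ (N1 1 + N2 1) * lhsWeight n (shift N1) (shift N2) i t := by
  rw [lhsWeight, lhsWeight, g1_cons_one i t h, lTerm_cons, lTerm_cons, deltaR_cons_one, Fin.val_one,
    one_mul, one_mul, pow_add]
  ring

lemma lhsWeight_cons_zero (t : Fin (n + 1) → Fin 2) :
    lhsWeight (n + 2) N1 N2 i (Fin.cons 0 t) =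
      lhsWeight (n + 1) (shift N1) (shift N2) i t - X ^ (N1 1 - N1 2) *
        if t 0 = 1 then lhsWeight (n + 1) (shift N1) (shift N2) i t else 0 := by
  rw [lhsWeight, lhsWeight, g1_cons_zero, lTerm_cons, lTerm_cons, deltaR_cons_zero, Fin.val_zero,
    zero_mul, zero_mul, pow_zero, one_mul, one_mul]
  split_ifs <;> ring

lemma rhsWeight_cons_zero (t : Fin n → Fin 2) (h : i + onesCount n t ≤ n) :
    rhsWeight (n + 1) N1 N2 i (Fin.cons 0 t) = rhsWeight n (shift N1) (shift N2) i t := by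
  rw [rhsWeight, rhsWeight, g0_cons_zero i t h, lTerm_cons, lTerm_cons, deltaL_cons_zero,
    Fin.val_zero, zero_mul, zero_mul, pow_zero, one_mul, one_mul]

lemma rhsWeight_cons_one (t : Fin (n + 1) → Fin 2) :
    rhsWeight (n + 2) N1 N2 i (Fin.cons 1 t) =
      X ^ (N1 1 + N2 1) * (rhsWeight (n + 1) (shift N1) (shift N2) i t - X ^ (N2 2 - N2 1) *
        if t 0 = 0 then rhsWeight (n + 1) (shift N1) (shift N2) i t else 0) := by
  rw [rhsWeight, rhsWeight, g0_cons_one, lTerm_cons, lTerm_cons, deltaL_cons_one, Fin.val_one,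
    one_mul, one_mul, pow_add]
  split_ifs <;> ring

lemma lhsSum_succ_succ (j : ℕ) :
    lhsSum (n + 2) N1 N2 i (j + 1) =
      lhsSum (n + 1) (shift N1) (shift N2) i (j + 1) +
        X ^ (N1 1 + N2 1) * lhsSum (n + 1) (shift N1) (shift N2) i j -
        X ^ (N1 1 - N1 2) *
          (X ^ (N1 2 + N2 2) * lhsSum n (shift (shift N1)) (shift (shift N2)) i j) := by
  have head_one {m : ℕ} (M1 M2 : ℕ → ℕ) :
      onesSum m (i + j) (fun t => lhsWeight (m + 1) M1 M2 i (Fin.cons 1 t)) =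
        X ^ (M1 1 + M2 1) * lhsSum m (shift M1) (shift M2) i j := by
    rw [lhsSum, ← onesSum_mul_left]
    exact onesSum_congr fun t ht => lhsWeight_cons_one M1 M2 i t (by omega)
  rw [lhsSum, ← add_assoc, onesSum_succ_succ, head_one]
  simp only [lhsWeight_cons_zero, onesSum_sub, onesSum_mul_left]
  rw [onesSum_ite_head_one, head_one]
  simp only [lhsSum, shift, ← add_assoc]
  ring

lemma rhsSum_succ_succ (j : ℕ) (h : i + j ≤ n) :
    rhsSum (n + 2) N1 N2 i (j + 1) =
      rhsSum (n + 1) (shift N1) (shift N2) i (j + 1) +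
        X ^ (N1 1 + N2 1) * rhsSum (n + 1) (shift N1) (shift N2) i j -
        X ^ (N1 1 + N2 1) * X ^ (N2 2 - N2 1) *
          rhsSum n (shift (shift N1)) (shift (shift N2)) i j := by
  have head_zero {m : ℕ} (M1 M2 : ℕ → ℕ) (w : ℕ) (hw : i + w ≤ m) :
      onesSum m w (fun t => rhsWeight (m + 1) M1 M2 i (Fin.cons 0 t)) =
        rhsSum m (shift M1) (shift M2) i w :=
    onesSum_congr fun t ht => rhsWeight_cons_zero M1 M2 i t (by omega)
  rw [rhsSum, onesSum_succ_succ, head_zero _ _ _ (by omega)]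
  simp only [rhsWeight_cons_one, onesSum_sub, onesSum_mul_left]
  rw [onesSum_ite_head_zero, head_zero _ _ _ h]
  simp only [rhsSum]
  ring

end Interchange

lemma lhsSum_zero_right (k i : ℕ) (N1 N2 : ℕ → ℕ) : lhsSum k N1 N2 i 0 = deltaRSum k i N1 :=
  onesSum_congr fun p hp => by
    rw [lhsWeight, g1_eq_zero_of_onesCount_le _ _ (by omega), lTerm_zero, mul_one]

lemma rhsSum_zero_right (k i : ℕ) (N1 N2 : ℕ → ℕ) :
    rhsSum k N1 N2 i 0 = lTerm k N1 (g0 k i fun _ => 0) := by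
  rw [rhsSum, onesSum_zero, rhsWeight, lTerm_zero, deltaL_const, mul_one, mul_one]

lemma lhsSum_length_add (i j : ℕ) (N1 N2 : ℕ → ℕ) :
    lhsSum (i + j) N1 N2 i j =
      lTerm (i + j) N1 (fun _ => 1) * lTerm (i + j) N2 (g1 (i + j) i fun _ => 1) := by
  rw [lhsSum, onesSum_self, lhsWeight, deltaR_const, mul_one]

lemma rhsSum_length_add (i j : ℕ) (N1 N2 : ℕ → ℕ) :
    rhsSum (i + j) N1 N2 i j = lTerm (i + j) N1 (fun _ => 1) * deltaLSum (i + j) j N2 := by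
  rw [rhsSum, deltaLSum, ← onesSum_mul_left]
  refine onesSum_congr fun p hp => ?_
  rw [rhsWeight, g0_eq_one_of_le _ _ (by omega), mul_assoc]

lemma lhsSum_eq_rhsSum {k i j : ℕ} {N1 N2 : ℕ → ℕ} (hij : i + j ≤ k)
    (hN1 : ∀ m, 1 ≤ m → m < k → N1 (m + 1) ≤ N1 m)
    (hN2 : ∀ m, 1 ≤ m → m < k → N2 m ≤ N2 (m + 1)) :
    lhsSum k N1 N2 i j = rhsSum k N1 N2 i j := by
  induction k using Nat.strong_induction_on generalizing j N1 N2 with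
  | _ k ih =>
  rcases Nat.eq_zero_or_pos j with rfl | hj
  · rw [lhsSum_zero_right, rhsSum_zero_right, deltaRSum_eq (by omega) hN1]
  rcases hij.eq_or_lt with rfl | hk
  · rw [lhsSum_length_add, rhsSum_length_add, deltaLSum_eq (by omega) hN2, Nat.add_sub_cancel]
  obtain ⟨n, rfl⟩ : ∃ n, k = n + 2 := ⟨k - 2, by omega⟩
  obtain ⟨j, rfl⟩ : ∃ v, j = v + 1 := ⟨j - 1, by omega⟩
  have h1' := shift_step_antitone (k := n + 1) hN1
  have h2' := shift_step_monotone (k := n + 1) hN2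
  have h1'' := shift_step_antitone h1'
  have h2'' := shift_step_monotone h2'
  have hcoeff : N1 1 - N1 2 + (N1 2 + N2 2) = N1 1 + N2 1 + (N2 2 - N2 1) := by
    have : N1 2 ≤ N1 1 := hN1 1 le_rfl (by omega)
    have : N2 1 ≤ N2 2 := hN2 1 le_rfl (by omega)
    omega
  rw [lhsSum_succ_succ, rhsSum_succ_succ _ _ _ _ (by omega),
    ih (n + 1) (by omega) (by omega) h1' h2', ih (n + 1) (by omega) (by omega) h1' h2',
    ih n (by omega) (by omega) h1'' h2'', ← mul_assoc, ← pow_add, ← pow_add, hcoeff]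

theorem stmt6_general (k i j : ℕ) (hij : i + j ≤ k)
    (N1 N2 : ℕ → ℕ)
    (hN1 : ∀ m, 1 ≤ m → m ≤ k → N1 (m + 1) ≤ N1 m)
    (hN2 : ∀ m, 1 ≤ m → m < k → N2 m ≤ N2 (m + 1)) :
    ∑ p ∈ Finset.univ.filter (fun p : Fin k → Fin 2 => onesCount k p = i + j),
        lTerm k N1 p * deltaR k N1 p * lTerm k N2 (g1 k i p) =
    ∑ p' ∈ Finset.univ.filter (fun p' : Fin k → Fin 2 => onesCount k p' = j),
        lTerm k N1 (g0 k i p') * lTerm k N2 p' * deltaL k N2 p' :=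
  lhsSum_eq_rhsSum hij (fun m h1 h2 => hN1 m h1 h2.le) hN2

/-- Proposition 3.10: the interchange identity between the two parameterizations
of the linear term. -/
theorem stmt6 (k i j : ℕ) (hk : 1 ≤ k) (hij : i + j ≤ k)
    (N1 N2 : ℕ → ℕ)
    (hN1 : ∀ m, 1 ≤ m → m ≤ k → N1 (m + 1) ≤ N1 m)
    (hN1z : ∀ m, k < m → N1 m = 0)
    (hN2 : ∀ m, 1 ≤ m → m < k → N2 m ≤ N2 (m + 1))
    (hN20 : N2 0 = 0) :
    ∑ p ∈ Finset.univ.filter (fun p : Fin k → Fin 2 => onesCount k p = i + j),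
        lTerm k N1 p * deltaR k N1 p * lTerm k N2 (g1 k i p) =
    ∑ p' ∈ Finset.univ.filter (fun p' : Fin k → Fin 2 => onesCount k p' = j),
        lTerm k N1 (g0 k i p') * lTerm k N2 p' * deltaL k N2 p' :=
  stmt6_general k i j hij N1 N2 hN1 hN2
end

section
/- Fix k ≥ 1, integers k_0, k_1, k_2 ≥ 1 with k_0 + k_1 + k_2 = k, nonincreasing integers N_{1,1} ≥ ... ≥ N_{1,k} ≥ 0 (N_{1,k+1} := 0) and nondecreasing 0 ≤ N_{2,1} ≤ ... ≤ N_{2,k} (N_{2,0} := 0). For a binary k-tuple p define l^1_p(q) = q^{∑ p_i N_{1,i}}, δ^1_p(q) = ∏_{i=1}^k (1-[p_i=0,p_{i+1}=1]q^{N_{1,i}-N_{1,i+1}}) with p_{k+1}=0, l^2_p(q) = q^{∑ p_i N_{2,i}}, and let g_j^1(p) change the last j ones of p to zeros. Define L_{a,b,c}(q) = ∑_{p with b+c ones} l^1_p(q) δ^1_p(q) l^2_{g_b^1(p)}(q) for a+b+c = k. Then L_{k_0,k_1,k_2}(q) - L_{k_0-1,k_1+1,k_2}(q) - L_{k_0,k_1-1,k_2+1}(q)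 + L_{k_0-1,k_1,k_2+1}(q) = ∑_{p with k_1+k_2 ones, p_k = 1} l^1_p δ^1_p l^2_{g_{k_1}^1(p)} (1-q^{N_{2,r(p)}}) + ∑_{p with k_1+k_2 ones, p_k = 0} l^1_p δ^1_p (1-q^{N_{1,k}}) l^2_{g_{k_1}^1(p)} (1-q^{N_{2,r(p)}}), where r(p) = pos_{1,k_2+1}(p) is the position of the (k_2+1)-th one of p. -/
open Finset Polynomial

open Matrix

/-- The linear term `L_{a,b,c}(q) = ∑_{p : b+c ones} l¹_p δ¹_p l²_{g_b^1(p)}`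
(it depends only on `b`, `c`). -/
noncomputable def Lfun (k : ℕ) (N1 N2 : ℕ → ℕ) (b c : ℕ) : Polynomial ℤ :=
  ∑ p ∈ Finset.univ.filter (fun p : Fin k → Fin 2 => onesCount k p = b + c),
    lTerm k N1 p * deltaR k N1 p * lTerm k N2 (g1 k b p)

/-!
With `r(p) = pos_{c+1}(p)`, the tuple `g_b(p)` is `g_{b+1}(p)` with the one at `r(p)` restored, so
`L_{·,b+1,c} - L_{·,b,c+1} = ∑_{p : b+1+c ones} l¹_p δ¹_p F(p)` with
`F(p) = l²_{g_{b+1}(p)} (1 - q^{N₂,r(p)})`. The left-hand side is therefore `S_m - S_{m+1}` for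
`m = k₁ + k₂`, where `S_n` sums `l¹_p δ¹_p F(p)` over the tuples with `n` ones.

Every tuple with `m + 1` ones arises exactly once from a tuple `p` with `m` ones by turning
into a one the entry at a position `j` after the last one `t` of `p`. This leaves `F` unchanged
and multiplies `l¹ δ¹` by `q^{N₁,j} (1 - q^{N₁,j-1 - N₁,j})` (by `q^{N₁,j}` alone when
`j = t + 1`), and since `N₁` is nonincreasing these factors telescope over `t < j ≤ k` to
`q^{N₁,k}`. Hence `S_{m+1}` is `q^{N₁,k}` times the part of `S_m` with `p_k = 0`, which is the
claim.
-/

section Positions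

variable {k : ℕ}

lemma ext'_le_one (p : Fin k → Fin 2) (i : ℕ) : ext' k p i ≤ 1 := by
  unfold ext'
  split
  · exact Nat.le_of_lt_succ (Fin.isLt _)
  · exact zero_le_one

lemma ext'_of_not_mem {p : Fin k → Fin 2} {i : ℕ} (hi : ¬(1 ≤ i ∧ i ≤ k)) : ext' k p i = 0 :=
  dif_neg hi

lemma mem_of_ext'_eq_one {p : Fin k → Fin 2} {i : ℕ} (h : ext' k p i = 1) : 1 ≤ i ∧ i ≤ k := by
  by_contra hi
  rw [ext'_of_not_mem hi] at h
  exact zero_ne_one h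

lemma exists_fin_succ_eq {i : ℕ} (hi : 1 ≤ i ∧ i ≤ k) : ∃ n : Fin k, (n : ℕ) + 1 = i :=
  ⟨⟨i - 1, by omega⟩, by simp only; omega⟩

lemma ext'_succ (p : Fin k → Fin 2) (n : Fin k) : ext' k p (n + 1) = p n := by
  rw [ext', dif_pos ⟨by omega, by omega⟩]
  rfl

lemma eq_of_forall_ext'_eq {p p' : Fin k → Fin 2} (h : ∀ i, ext' k p i = ext' k p' i) :
    p = p' := by
  funext n
  have hn := h (n + 1)
  rw [ext'_succ, ext'_succ] at hn
  exact Fin.ext hn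

def prefixOnes (k : ℕ) (p : Fin k → Fin 2) (j : ℕ) : ℕ := ∑ i ∈ Icc 1 j, ext' k p i

@[simp] lemma prefixOnes_zero (p : Fin k → Fin 2) : prefixOnes k p 0 = 0 := rfl

lemma prefixOnes_succ (p : Fin k → Fin 2) (j : ℕ) :
    prefixOnes k p (j + 1) = prefixOnes k p j + ext' k p (j + 1) :=
  sum_Icc_succ_top (by omega) _

lemma prefixOnes_pred_add_ext' (p : Fin k → Fin 2) {j : ℕ} (hj : 1 ≤ j) :
    prefixOnes k p (j - 1) + ext' k p j = prefixOnes k p j := by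
  obtain ⟨j, rfl⟩ : ∃ j', j = j' + 1 := ⟨j - 1, by omega⟩
  rw [Nat.add_sub_cancel, prefixOnes_succ]

lemma prefixOnes_eq_sum_range (p : Fin k → Fin 2) (j : ℕ) :
    prefixOnes k p j = ∑ i ∈ range j, ext' k p (i + 1) := by
  induction j with
  | zero => rfl
  | succ j ih => rw [prefixOnes_succ, ih, sum_range_succ]

lemma prefixOnes_mono (p : Fin k → Fin 2) : Monotone (prefixOnes k p) := fun _ _ h =>
  sum_le_sum_of_subset (Icc_subset_Icc le_rfl h)

lemma prefixOnes_lt_of_ext'_eq_one {p : Fin k → Fin 2} {i j : ℕ} (hij : i < j)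
    (hj : ext' k p j = 1) : prefixOnes k p i < prefixOnes k p j := by
  obtain ⟨j, rfl⟩ : ∃ j', j = j' + 1 := ⟨j - 1, by omega⟩
  rw [prefixOnes_succ, hj]
  exact Nat.lt_succ_of_le (prefixOnes_mono p (by omega))

lemma onesCount_eq_prefixOnes (p : Fin k → Fin 2) : onesCount k p = prefixOnes k p k := by
  rw [prefixOnes_eq_sum_range, ← Fin.sum_univ_eq_sum_range (fun i => ext' k p (i + 1))]
  exact sum_congr rfl fun n _ => (ext'_succ p n).symm

lemma prefixOnes_of_le {p : Fin k → Fin 2} {j : ℕ} (h : k ≤ j) :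
    prefixOnes k p j = onesCount k p := by
  induction j, h using Nat.le_induction with
  | base => exact (onesCount_eq_prefixOnes p).symm
  | succ j hj ih => rw [prefixOnes_succ, ih, ext'_of_not_mem (by omega), add_zero]

lemma prefixOnes_le_onesCount (p : Fin k → Fin 2) (j : ℕ) : prefixOnes k p j ≤ onesCount k p :=
  prefixOnes_of_le (p := p) (le_max_right j k) ▸ prefixOnes_mono p (le_max_left j k)

lemma pos1_eq_of {p : Fin k → Fin 2} {j r : ℕ} (h1 : ext' k p r = 1)
    (h2 : prefixOnes k p r = j) : pos1 k j p = r := by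
  have hset : {m | ext' k p m = 1 ∧ ∑ i ∈ Icc 1 m, ext' k p i = j} = {r} := by
    ext m
    refine ⟨fun ⟨hm1, hm2⟩ => ?_, fun hm => hm ▸ ⟨h1, h2⟩⟩
    by_contra hne
    rcases Nat.lt_or_gt_of_ne hne with h | h
    · exact (prefixOnes_lt_of_ext'_eq_one h h1).ne (hm2.trans h2.symm)
    · exact (prefixOnes_lt_of_ext'_eq_one h hm1).ne (h2.trans hm2.symm)
  rw [pos1, hset, csInf_singleton]

lemma exists_ext'_eq_one_prefixOnes_eq {p : Fin k → Fin 2} {j : ℕ} (hj : 1 ≤ j)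
    (hjp : j ≤ onesCount k p) : ∃ r, ext' k p r = 1 ∧ prefixOnes k p r = j := by
  classical
  have hex : ∃ m, j ≤ prefixOnes k p m := ⟨k, (prefixOnes_of_le le_rfl).symm ▸ hjp⟩
  have hr : j ≤ prefixOnes k p (Nat.find hex) := Nat.find_spec hex
  have hr0 : Nat.find hex ≠ 0 := by
    intro h
    rw [h, prefixOnes_zero] at hr
    omega
  have hprev : ¬ j ≤ prefixOnes k p (Nat.find hex - 1) := Nat.find_min hex (by omega)
  have hsucc := prefixOnes_pred_add_ext' p (Nat.one_le_iff_ne_zero.2 hr0)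
  have := ext'_le_one p (Nat.find hex)
  exact ⟨Nat.find hex, by omega, by omega⟩

lemma pos1_spec {p : Fin k → Fin 2} {j : ℕ} (hj : 1 ≤ j) (hjp : j ≤ onesCount k p) :
    ext' k p (pos1 k j p) = 1 ∧ prefixOnes k p (pos1 k j p) = j := by
  obtain ⟨r, h1, h2⟩ := exists_ext'_eq_one_prefixOnes_eq hj hjp
  rw [pos1_eq_of h1 h2]
  exact ⟨h1, h2⟩

lemma pos1_mem {p : Fin k → Fin 2} {j : ℕ} (hj : 1 ≤ j) (hjp : j ≤ onesCount k p) :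
    1 ≤ pos1 k j p ∧ pos1 k j p ≤ k :=
  mem_of_ext'_eq_one (pos1_spec hj hjp).1

section LastOne

variable {p : Fin k → Fin 2} {m : ℕ}

lemma ext'_eq_zero_of_pos1_lt (hm : 1 ≤ m) (hpm : onesCount k p = m) {i : ℕ}
    (hi : pos1 k m p < i) : ext' k p i = 0 := by
  obtain ⟨-, hlast⟩ := pos1_spec hm hpm.ge
  by_contra h
  have hi1 : ext' k p i = 1 := by have := ext'_le_one p i; omega
  have := prefixOnes_lt_of_ext'_eq_one hi hi1
  have := prefixOnes_le_onesCount p i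
  omega

lemma prefixOnes_eq_of_pos1_le (hm : 1 ≤ m) (hpm : onesCount k p = m) {i : ℕ}
    (hi : pos1 k m p ≤ i) : prefixOnes k p i = m := by
  obtain ⟨-, hlast⟩ := pos1_spec hm hpm.ge
  have := prefixOnes_mono p hi
  have := prefixOnes_le_onesCount p i
  omega

lemma pos1_le_pos1 (hm : 1 ≤ m) (hpm : onesCount k p = m) {j : ℕ} (hj : 1 ≤ j) (hjm : j ≤ m) :
    pos1 k j p ≤ pos1 k m p := by
  obtain ⟨h1, -⟩ := pos1_spec hj (hpm ▸ hjm)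
  by_contra h
  rw [ext'_eq_zero_of_pos1_lt hm hpm (not_le.1 h)] at h1
  exact zero_ne_one h1

end LastOne

end Positions

section SetAt

variable {k : ℕ}

def setAt (k j : ℕ) (v : Fin 2) (p : Fin k → Fin 2) : Fin k → Fin 2 :=
  fun n => if (n : ℕ) + 1 = j then v else p n

lemma ext'_setAt_of_ne {j i : ℕ} (v : Fin 2) (p : Fin k → Fin 2) (h : i ≠ j) :
    ext' k (setAt k j v p) i = ext' k p i := by
  by_cases hi : 1 ≤ i ∧ i ≤ k
  · obtain ⟨n, rfl⟩ := exists_fin_succ_eq hi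
    rw [ext'_succ, ext'_succ, setAt, if_neg h]
  · rw [ext'_of_not_mem hi, ext'_of_not_mem hi]

lemma ext'_setAt_self {j : ℕ} (hj : 1 ≤ j) (hjk : j ≤ k) (v : Fin 2) (p : Fin k → Fin 2) :
    ext' k (setAt k j v p) j = v := by
  obtain ⟨n, rfl⟩ := exists_fin_succ_eq ⟨hj, hjk⟩
  rw [ext'_succ, setAt, if_pos rfl]

lemma setAt_setAt {j : ℕ} (hj : 1 ≤ j) (hjk : j ≤ k) {v w : Fin 2} {p : Fin k → Fin 2}
    (h : ext' k p j = v) : setAt k j v (setAt k j w p) = p :=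
  eq_of_forall_ext'_eq fun i => by
    rcases eq_or_ne i j with rfl | hij
    · rw [ext'_setAt_self hj hjk, h]
    · rw [ext'_setAt_of_ne _ _ hij, ext'_setAt_of_ne _ _ hij]

lemma prefixOnes_setAt_of_lt {j n : ℕ} (v : Fin 2) (p : Fin k → Fin 2) (h : n < j) :
    prefixOnes k (setAt k j v p) n = prefixOnes k p n :=
  sum_congr rfl fun i hi => ext'_setAt_of_ne _ _ (by rw [mem_Icc] at hi; omega)

lemma pos1_setAt_of_lt {p : Fin k → Fin 2} {i j : ℕ} (v : Fin 2) (hi : 1 ≤ i)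
    (hip : i ≤ onesCount k p) (h : pos1 k i p < j) : pos1 k i (setAt k j v p) = pos1 k i p := by
  obtain ⟨h1, h2⟩ := pos1_spec hi hip
  exact pos1_eq_of (by rwa [ext'_setAt_of_ne _ _ h.ne]) (by rwa [prefixOnes_setAt_of_lt _ _ h])

section SetOne

variable {j : ℕ} {p : Fin k → Fin 2}

lemma sum_ext'_setAt_one_mul (hj : 1 ≤ j) (hjk : j ≤ k) (hpj : ext' k p j = 0)
    (f : ℕ → ℕ) (n : ℕ) :
    ∑ i ∈ Icc 1 n, ext' k (setAt k j 1 p) i * f i =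
      ∑ i ∈ Icc 1 n, ext' k p i * f i + if j ≤ n then f j else 0 := by
  have hterm : ∀ i, ext' k (setAt k j 1 p) i * f i =
      ext' k p i * f i + if i = j then f j else 0 := by
    intro i
    rcases eq_or_ne i j with rfl | hij
    · simp [ext'_setAt_self hj hjk, hpj]
    · simp [ext'_setAt_of_ne _ _ hij, hij]
  rw [sum_congr rfl fun i _ => hterm i, sum_add_distrib, sum_ite_eq']
  simp only [mem_Icc, hj, true_and]

lemma prefixOnes_setAt_one (hj : 1 ≤ j) (hjk : j ≤ k) (hpj : ext' k p j = 0)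
    (n : ℕ) :
    prefixOnes k (setAt k j 1 p) n = prefixOnes k p n + if j ≤ n then 1 else 0 := by
  simpa [prefixOnes] using sum_ext'_setAt_one_mul hj hjk hpj (fun _ => 1) n

lemma onesCount_setAt_one (hj : 1 ≤ j) (hjk : j ≤ k) (hpj : ext' k p j = 0)
    : onesCount k (setAt k j 1 p) = onesCount k p + 1 := by
  rw [← prefixOnes_of_le le_rfl, ← prefixOnes_of_le le_rfl, prefixOnes_setAt_one hj hjk hpj,
    if_pos hjk]

lemma lTerm_setAt_one (hj : 1 ≤ j) (hjk : j ≤ k) (hpj : ext' k p j = 0)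
    (N : ℕ → ℕ) :
    lTerm k N (setAt k j 1 p) = X ^ N j * lTerm k N p := by
  rw [lTerm, lTerm, sum_ext'_setAt_one_mul hj hjk hpj, if_pos hjk, pow_add, mul_comm]

end SetOne

end SetAt

section G1

variable {k : ℕ}

lemma card_filter_le_and_eq_one (p : Fin k → Fin 2) (m : Fin k) :
    #{n | m ≤ n ∧ p n = 1} = onesCount k p - prefixOnes k p m := by
  have hsuffix :
      #{n | m ≤ n ∧ p n = 1} = ∑ n : Fin k, if m ≤ n then (p n : ℕ) else 0 := by
    rw [card_filter]
    refine sum_congr rfl fun n _ => ?_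
    rcases Fin.exists_fin_two.1 ⟨p n, rfl⟩ with h | h <;> simp [h]
  have hprefix : prefixOnes k p m = ∑ n : Fin k, if n < m then (p n : ℕ) else 0 := calc
    prefixOnes k p m = ∑ i ∈ range k, if i < m then ext' k p (i + 1) else 0 := by
      rw [prefixOnes_eq_sum_range, ← sum_filter]
      congr 1
      ext i
      simp only [mem_range, mem_filter]
      omega
    _ = ∑ n : Fin k, if n < m then (p n : ℕ) else 0 := by
      rw [← Fin.sum_univ_eq_sum_range (fun i => if i < m then ext' k p (i + 1) else 0)]
      simp only [ext'_succ, Fin.lt_def]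
  have htotal : prefixOnes k p m + #{n | m ≤ n ∧ p n = 1} = onesCount k p := by
    rw [hsuffix, hprefix, ← sum_add_distrib]
    refine sum_congr rfl fun n _ => ?_
    split_ifs <;> omega
  omega

lemma ext'_g1 (b : ℕ) (p : Fin k → Fin 2) (i : ℕ) :
    ext' k (g1 k b p) i =
      if onesCount k p - b ≤ prefixOnes k p (i - 1) then 0 else ext' k p i := by
  by_cases hi : 1 ≤ i ∧ i ≤ k
  · obtain ⟨n, rfl⟩ := exists_fin_succ_eq hi
    rw [ext'_succ, ext'_succ, Nat.add_sub_cancel, g1, card_filter_le_and_eq_one]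
    rcases Fin.exists_fin_two.1 ⟨p n, rfl⟩ with h | h <;> rw [h]
    · simp
    · by_cases hc : onesCount k p - b ≤ prefixOnes k p n
      · rw [if_pos ⟨rfl, by omega⟩, if_pos hc, Fin.val_zero]
      · rw [if_neg (by omega), if_neg hc]
  · simp [ext'_of_not_mem hi]

section Restore

variable {p : Fin k → Fin 2} {b c : ℕ}

lemma ext'_g1_succ_pos1 (hp : onesCount k p = b + 1 + c) :
    ext' k (g1 k (b + 1) p) (pos1 k (c + 1) p) = 0 := by
  obtain ⟨h1, h2⟩ := pos1_spec (Nat.le_add_left 1 c) (by omega : c + 1 ≤ onesCount k p)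
  have hprev := prefixOnes_pred_add_ext' p (mem_of_ext'_eq_one h1).1
  rw [ext'_g1, if_pos (by omega)]

lemma g1_eq_setAt_g1_succ (hp : onesCount k p = b + 1 + c) :
    g1 k b p = setAt k (pos1 k (c + 1) p) 1 (g1 k (b + 1) p) := by
  obtain ⟨h1, h2⟩ := pos1_spec (Nat.le_add_left 1 c) (by omega : c + 1 ≤ onesCount k p)
  have hr := mem_of_ext'_eq_one h1
  refine eq_of_forall_ext'_eq fun i => ?_
  rcases eq_or_ne i (pos1 k (c + 1) p) with rfl | hi
  · have hprev := prefixOnes_pred_add_ext' p hr.1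
    rw [ext'_setAt_self hr.1 hr.2, ext'_g1, if_neg (by omega), h1, Fin.val_one]
  · rw [ext'_setAt_of_ne _ _ hi, ext'_g1, ext'_g1, hp]
    -- the two thresholds differ only at the `(c+1)`-th one, which is at position `pos1 k (c+1) p`
    by_cases hpre : prefixOnes k p (i - 1) = c ∧ ext' k p i = 1
    · have hsucc := prefixOnes_pred_add_ext' p (mem_of_ext'_eq_one hpre.2).1
      exact absurd (pos1_eq_of hpre.2 (by omega)).symm hi
    · have := ext'_le_one p i
      split_ifs <;> omega

lemma lTerm_g1 (hp : onesCount k p = b + 1 + c) (N : ℕ → ℕ) :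
    lTerm k N (g1 k b p) = X ^ N (pos1 k (c + 1) p) * lTerm k N (g1 k (b + 1) p) := by
  have hr := pos1_mem (Nat.le_add_left 1 c) (by omega : c + 1 ≤ onesCount k p)
  rw [g1_eq_setAt_g1_succ hp, lTerm_setAt_one hr.1 hr.2 (ext'_g1_succ_pos1 hp)]

end Restore

end G1

section AppendOne

variable {k : ℕ} {p : Fin k → Fin 2} {m j : ℕ}

lemma one_le_of_pos1_lt (hm : 1 ≤ m) (hpm : onesCount k p = m) (hj : pos1 k m p < j) :
    1 ≤ j := by
  have := pos1_mem hm hpm.ge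
  omega

lemma onesCount_setAt_one_of_pos1_lt (hm : 1 ≤ m) (hpm : onesCount k p = m) (hj : pos1 k m p < j)
    (hjk : j ≤ k) : onesCount k (setAt k j 1 p) = m + 1 := by
  rw [onesCount_setAt_one (one_le_of_pos1_lt hm hpm hj) hjk
    (ext'_eq_zero_of_pos1_lt hm hpm hj), hpm]

lemma pos1_succ_setAt_one (hm : 1 ≤ m) (hpm : onesCount k p = m) (hj : pos1 k m p < j)
    (hjk : j ≤ k) : pos1 k (m + 1) (setAt k j 1 p) = j := by
  have hj1 := one_le_of_pos1_lt hm hpm hj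
  have hpj := ext'_eq_zero_of_pos1_lt hm hpm hj
  refine pos1_eq_of (by rw [ext'_setAt_self hj1 hjk, Fin.val_one]) ?_
  rw [prefixOnes_setAt_one hj1 hjk hpj, if_pos le_rfl, prefixOnes_eq_of_pos1_le hm hpm hj.le]

lemma g1_succ_setAt_one (hm : 1 ≤ m) (hpm : onesCount k p = m) (hj : pos1 k m p < j)
    (hjk : j ≤ k) (b : ℕ) : g1 k (b + 1) (setAt k j 1 p) = g1 k b p := by
  have hj1 := one_le_of_pos1_lt hm hpm hj
  have hpj := ext'_eq_zero_of_pos1_lt hm hpm hj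
  refine eq_of_forall_ext'_eq fun i => ?_
  rw [ext'_g1, ext'_g1, onesCount_setAt_one hj1 hjk hpj, hpm, Nat.add_sub_add_right,
    prefixOnes_setAt_one hj1 hjk hpj]
  rcases lt_trichotomy i j with hij | rfl | hij
  · rw [if_neg (show ¬ j ≤ i - 1 by omega), add_zero, ext'_setAt_of_ne _ _ hij.ne]
  · rw [if_neg (show ¬ i ≤ i - 1 by omega), add_zero,
      prefixOnes_eq_of_pos1_le hm hpm (by omega), hpj, if_pos (Nat.sub_le m b)]
    simp
  · rw [if_pos (show j ≤ i - 1 by omega), prefixOnes_eq_of_pos1_le hm hpm (by omega),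
      ext'_eq_zero_of_pos1_lt hm hpm (hj.trans hij), if_pos (by omega)]
    simp

lemma deltaR_setAt_one (hm : 1 ≤ m) (hpm : onesCount k p = m) (hj : pos1 k m p < j)
    (hjk : j ≤ k) (N : ℕ → ℕ) :
    deltaR k N (setAt k j 1 p) =
      (if j = pos1 k m p + 1 then 1 else 1 - X ^ (N (j - 1) - N j)) * deltaR k N p := by
  have hj1 := one_le_of_pos1_lt hm hpm hj
  have hzero : ∀ i, pos1 k m p < i → ext' k p i = 0 := fun i => ext'_eq_zero_of_pos1_lt hm hpm
  have hlast := (pos1_spec hm hpm.ge).1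
  obtain ⟨i, rfl⟩ : ∃ i, j = i + 1 := ⟨j - 1, by omega⟩
  have hi : i ∈ Icc 1 k := by
    have := pos1_mem hm hpm.ge
    rw [mem_Icc]
    omega
  have hnew : ext' k (setAt k (i + 1) 1 p) (i + 1) = 1 := ext'_setAt_self hj1 hjk 1 p
  -- only the factor at `i` changes: the one at `i + 1` is `1` both before (`p_{i+2} = 0`)
  -- and after (the entry `i + 1` is now `1`)
  have hrest : ∀ l ∈ (Icc 1 k).erase i,
      ((1 : ℤ[X]) - if ext' k (setAt k (i + 1) 1 p) l = 0 ∧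
          ext' k (setAt k (i + 1) 1 p) (l + 1) = 1 then X ^ (N l - N (l + 1)) else 0) =
      ((1 : ℤ[X]) - if ext' k p l = 0 ∧ ext' k p (l + 1) = 1
        then X ^ (N l - N (l + 1)) else 0) := by
    intro l hl
    have hli : l ≠ i := (mem_erase.1 hl).1
    rw [ext'_setAt_of_ne _ _ (by omega : l + 1 ≠ i + 1)]
    rcases eq_or_ne l (i + 1) with rfl | hl'
    · rw [hnew, hzero (i + 1 + 1) (by omega)]
      simp
    · rw [ext'_setAt_of_ne _ _ hl']
  unfold deltaR
  rw [← mul_prod_erase _ _ hi, ← mul_prod_erase _ _ hi, prod_congr rfl hrest,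
    ext'_setAt_of_ne _ _ (by omega : i ≠ i + 1), hnew, hzero (i + 1) hj, Nat.add_sub_cancel]
  by_cases hit : i = pos1 k m p
  · rw [hit, hlast]
    simp
  · rw [hzero i (by omega)]
    simp [hit]

end AppendOne

lemma sum_Ioc_pow_mul_telescope {R : Type*} [CommRing R] (q : R) (N : ℕ → ℕ) {t u : ℕ}
    (htu : t < u) (hN : ∀ i, t < i → i < u → N (i + 1) ≤ N i) :
    ∑ j ∈ Ioc t u, q ^ N j * (if j = t + 1 then 1 else 1 - q ^ (N (j - 1) - N j)) =
      q ^ N u := by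
  induction u, htu using Nat.le_induction with
  | base => simp
  | succ u htu ih =>
    rw [sum_Ioc_succ_top (by omega), ih fun i hi hiu => hN i hi (by omega), if_neg (by omega),
      Nat.add_sub_cancel, mul_sub, mul_one, ← pow_add,
      Nat.add_sub_cancel' (hN u htu (by omega))]
    ring

section RemoveLast

variable {k m : ℕ} {p : Fin k → Fin 2}

lemma setAt_one_setAt_zero_pos1 (hp : onesCount k p = m + 1) :
    setAt k (pos1 k (m + 1) p) 1 (setAt k (pos1 k (m + 1) p) 0 p) = p := by
  obtain ⟨ht1, -⟩ := pos1_spec (Nat.le_add_left 1 m) hp.ge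
  have ht := mem_of_ext'_eq_one ht1
  exact setAt_setAt ht.1 ht.2 (by rw [ht1, Fin.val_one])

lemma onesCount_setAt_zero_pos1 (hp : onesCount k p = m + 1) :
    onesCount k (setAt k (pos1 k (m + 1) p) 0 p) = m := by
  have ht := pos1_mem (Nat.le_add_left 1 m) hp.ge
  have := onesCount_setAt_one ht.1 ht.2 (ext'_setAt_self ht.1 ht.2 0 p)
  rw [setAt_one_setAt_zero_pos1 hp] at this
  omega

lemma pos1_lt_pos1_succ (hm : 1 ≤ m) (hp : onesCount k p = m + 1) :
    pos1 k m p < pos1 k (m + 1) p := by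
  refine lt_of_le_of_ne (pos1_le_pos1 (by omega) hp hm (by omega)) fun h => ?_
  have h1 := (pos1_spec hm (by omega : m ≤ onesCount k p)).2
  have h2 := (pos1_spec (Nat.le_add_left 1 m) hp.ge).2
  rw [h] at h1
  omega

lemma pos1_setAt_zero_pos1 (hm : 1 ≤ m) (hp : onesCount k p = m + 1) :
    pos1 k m (setAt k (pos1 k (m + 1) p) 0 p) = pos1 k m p :=
  pos1_setAt_of_lt 0 hm (by omega) (pos1_lt_pos1_succ hm hp)

lemma ext'_setAt_zero_pos1_last (hp : onesCount k p = m + 1) :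
    ext' k (setAt k (pos1 k (m + 1) p) 0 p) k = 0 := by
  have ht := pos1_mem (Nat.le_add_left 1 m) hp.ge
  rcases eq_or_lt_of_le ht.2 with h | h
  · rw [h]
    exact ext'_setAt_self (by omega) le_rfl 0 p
  · rw [ext'_setAt_of_ne _ _ h.ne', ext'_eq_zero_of_pos1_lt (by omega) hp h]

end RemoveLast

lemma sum_filter_onesCount_succ {M : Type*} [AddCommMonoid M] {k m : ℕ} (hm : 1 ≤ m)
    (G : (Fin k → Fin 2) → M) :
    ∑ p ∈ univ.filter (fun p : Fin k → Fin 2 => onesCount k p = m + 1), G p =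
      ∑ p ∈ univ.filter (fun p : Fin k → Fin 2 => onesCount k p = m ∧ ext' k p k = 0),
        ∑ j ∈ Ioc (pos1 k m p) k, G (setAt k j 1 p) := by
  refine Eq.trans ?_ (sum_sigma _ _ fun x : (_ : Fin k → Fin 2) × ℕ => G (setAt k x.2 1 x.1))
  refine sum_nbij' (fun p => ⟨setAt k (pos1 k (m + 1) p) 0 p, pos1 k (m + 1) p⟩)
    (fun x => setAt k x.2 1 x.1) (fun p hp => ?_) (fun x hx => ?_) (fun p hp => ?_)
    (fun x hx => ?_) (fun p hp => ?_)
  all_goals simp only [mem_sigma, mem_filter, mem_univ, true_and, mem_Ioc] at *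
  · refine ⟨⟨onesCount_setAt_zero_pos1 hp, ext'_setAt_zero_pos1_last hp⟩, ?_,
      (pos1_mem (Nat.le_add_left 1 m) hp.ge).2⟩
    rw [pos1_setAt_zero_pos1 hm hp]
    exact pos1_lt_pos1_succ hm hp
  · exact onesCount_setAt_one_of_pos1_lt hm hx.1.1 hx.2.1 hx.2.2
  · exact setAt_one_setAt_zero_pos1 hp
  · obtain ⟨⟨hpm, -⟩, hj, hjk⟩ := hx
    rw [pos1_succ_setAt_one hm hpm hj hjk, setAt_setAt (one_le_of_pos1_lt hm hpm hj) hjk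
      (by rw [ext'_eq_zero_of_pos1_lt hm hpm hj, Fin.val_zero])]
  · rw [setAt_one_setAt_zero_pos1 hp]

lemma sum_filter_onesCount_succ_mul_eq {k : ℕ} (N : ℕ → ℕ)
    (hN : ∀ i, 1 ≤ i → i ≤ k → N (i + 1) ≤ N i) {m : ℕ} (hm : 1 ≤ m)
    (F : (Fin k → Fin 2) → ℤ[X])
    (hF : ∀ p, onesCount k p = m → ∀ j, pos1 k m p < j → j ≤ k →
      F (setAt k j 1 p) = F p) :
    ∑ p ∈ univ.filter (fun p : Fin k → Fin 2 => onesCount k p = m + 1),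
        lTerm k N p * deltaR k N p * F p =
      X ^ N k * ∑ p ∈ univ.filter
        (fun p : Fin k → Fin 2 => onesCount k p = m ∧ ext' k p k = 0),
          lTerm k N p * deltaR k N p * F p := by
  rw [sum_filter_onesCount_succ hm, mul_sum]
  refine sum_congr rfl fun p hp => ?_
  obtain ⟨hpm, hpk⟩ := (mem_filter.1 hp).2
  have ht := pos1_spec hm hpm.ge
  have htk : pos1 k m p < k :=
    lt_of_le_of_ne (mem_of_ext'_eq_one ht.1).2 fun h => by rw [h, hpk] at ht; exact zero_ne_one ht.1
  calc ∑ j ∈ Ioc (pos1 k m p) k,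
        lTerm k N (setAt k j 1 p) * deltaR k N (setAt k j 1 p) * F (setAt k j 1 p)
      = ∑ j ∈ Ioc (pos1 k m p) k, X ^ N j *
          (if j = pos1 k m p + 1 then 1 else 1 - X ^ (N (j - 1) - N j)) *
          (lTerm k N p * deltaR k N p * F p) := by
        refine sum_congr rfl fun j hj => ?_
        obtain ⟨hj, hjk⟩ := mem_Ioc.1 hj
        rw [lTerm_setAt_one (one_le_of_pos1_lt hm hpm hj) hjk (ext'_eq_zero_of_pos1_lt hm hpm hj),
          deltaR_setAt_one hm hpm hj hjk, hF p hpm j hj hjk]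
        ring
    _ = X ^ N k * (lTerm k N p * deltaR k N p * F p) := by
        rw [← sum_mul, sum_Ioc_pow_mul_telescope _ _ htk fun i hi hik =>
          hN i (by have := (mem_of_ext'_eq_one ht.1).1; omega) hik.le]

/-- `l²_{g_b(p)} (1 - q^{N₂,r(p)})` with `b = #ones(p) - c` and `r(p) = pos_{c+1}(p)`. Indexed by
`c` rather than `b`, it is unchanged when a one is appended after the last one of `p`. -/
noncomputable def starFactor (k c : ℕ) (N : ℕ → ℕ) (p : Fin k → Fin 2) : ℤ[X] :=
  lTerm k N (g1 k (onesCount k p - c) p) * (1 - X ^ N (pos1 k (c + 1) p))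

lemma starFactor_setAt_one {k c m j : ℕ} {p : Fin k → Fin 2} (N : ℕ → ℕ) (hcm : c + 1 ≤ m)
    (hpm : onesCount k p = m) (hj : pos1 k m p < j) (hjk : j ≤ k) :
    starFactor k c N (setAt k j 1 p) = starFactor k c N p := by
  have hm : 1 ≤ m := by omega
  rw [starFactor, starFactor, onesCount_setAt_one_of_pos1_lt hm hpm hj hjk, hpm,
    Nat.sub_add_comm (by omega), g1_succ_setAt_one hm hpm hj hjk,
    pos1_setAt_of_lt 1 (by omega) (by omega) ((pos1_le_pos1 hm hpm (by omega) hcm).trans_lt hj)]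

lemma Lfun_succ_sub_Lfun {k : ℕ} (N1 N2 : ℕ → ℕ) (b c : ℕ) :
    Lfun k N1 N2 (b + 1) c - Lfun k N1 N2 b (c + 1) =
      ∑ p ∈ univ.filter (fun p : Fin k → Fin 2 => onesCount k p = b + 1 + c),
        lTerm k N1 p * deltaR k N1 p * starFactor k c N2 p := by
  rw [Lfun, Lfun, show b + (c + 1) = b + 1 + c by omega, ← sum_sub_distrib]
  refine sum_congr rfl fun p hp => ?_
  have hp := (mem_filter.1 hp).2
  rw [starFactor, lTerm_g1 hp, hp, Nat.add_sub_cancel]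
  ring

lemma sum_filter_onesCount_eq_add {M : Type*} [AddCommMonoid M] {k : ℕ} (m : ℕ)
    (f : (Fin k → Fin 2) → M) :
    ∑ p ∈ univ.filter (fun p : Fin k → Fin 2 => onesCount k p = m), f p =
      ∑ p ∈ univ.filter (fun p : Fin k → Fin 2 => onesCount k p = m ∧ ext' k p k = 1), f p +
        ∑ p ∈ univ.filter
          (fun p : Fin k → Fin 2 => onesCount k p = m ∧ ext' k p k = 0), f p := by
  rw [← sum_filter_add_sum_filter_not _ (fun p => ext' k p k = 1), filter_filter, filter_filter]
  congr 2
  ext p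
  simp only [mem_filter, mem_univ, true_and]
  exact and_congr_right fun _ => by have := ext'_le_one p k; omega

theorem stmt14_general (k k1 k2 : ℕ) (h1 : 1 ≤ k1) (N1 N2 : ℕ → ℕ)
    (hN1 : ∀ i, 1 ≤ i → i ≤ k → N1 (i + 1) ≤ N1 i) :
    Lfun k N1 N2 k1 k2 - Lfun k N1 N2 (k1 + 1) k2
      - Lfun k N1 N2 (k1 - 1) (k2 + 1) + Lfun k N1 N2 k1 (k2 + 1) =
    (∑ p ∈ Finset.univ.filter
        (fun p : Fin k → Fin 2 => onesCount k p = k1 + k2 ∧ ext' k p k = 1),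
      lTerm k N1 p * deltaR k N1 p * lTerm k N2 (g1 k k1 p) *
        (1 - Polynomial.X ^ N2 (pos1 k (k2 + 1) p)))
    + (∑ p ∈ Finset.univ.filter
        (fun p : Fin k → Fin 2 => onesCount k p = k1 + k2 ∧ ext' k p k = 0),
      lTerm k N1 p * deltaR k N1 p * (1 - Polynomial.X ^ N1 k) *
        lTerm k N2 (g1 k k1 p) *
        (1 - Polynomial.X ^ N2 (pos1 k (k2 + 1) p))) := by
  obtain ⟨b, rfl⟩ : ∃ b, k1 = b + 1 := ⟨k1 - 1, by omega⟩
  have hweight : ∀ p : Fin k → Fin 2, onesCount k p = b + 1 + k2 →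
      lTerm k N1 p * deltaR k N1 p * starFactor k k2 N2 p =
        lTerm k N1 p * deltaR k N1 p * lTerm k N2 (g1 k (b + 1) p) *
          (1 - X ^ N2 (pos1 k (k2 + 1) p)) := fun p hp => by
    rw [starFactor, hp, Nat.add_sub_cancel]
    ring
  calc _ = (Lfun k N1 N2 (b + 1) k2 - Lfun k N1 N2 b (k2 + 1))
        - (Lfun k N1 N2 (b + 1 + 1) k2 - Lfun k N1 N2 (b + 1) (k2 + 1)) := by
        rw [Nat.add_sub_cancel]
        ring
    _ = ∑ p ∈ univ.filter (fun p : Fin k → Fin 2 => onesCount k p = b + 1 + k2),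
          lTerm k N1 p * deltaR k N1 p * starFactor k k2 N2 p
        - X ^ N1 k * ∑ p ∈ univ.filter
            (fun p : Fin k → Fin 2 => onesCount k p = b + 1 + k2 ∧ ext' k p k = 0),
          lTerm k N1 p * deltaR k N1 p * starFactor k k2 N2 p := by
        rw [Lfun_succ_sub_Lfun, Lfun_succ_sub_Lfun, add_right_comm (b + 1),
          sum_filter_onesCount_succ_mul_eq N1 hN1 (by omega) _
            fun p hp j hj hjk => starFactor_setAt_one N2 (by omega) hp hj hjk]
    _ = _ := by
        rw [sum_filter_onesCount_eq_add, mul_sum, add_sub_assoc, ← sum_sub_distrib]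
        refine congrArg₂ (· + ·) (sum_congr rfl fun p hp => ?_) (sum_congr rfl fun p hp => ?_)
        · rw [hweight p (mem_filter.1 hp).2.1]
        · rw [hweight p (mem_filter.1 hp).2.1]
          ring

/-- Lemma 4.1: the alternating combination of linear terms equals the starred
linear term `L*_{k₀,k₁,k₂}(q)`. -/
theorem stmt14 (k k0 k1 k2 : ℕ) (h0 : 1 ≤ k0) (h1 : 1 ≤ k1) (h2 : 1 ≤ k2)
    (hsum : k0 + k1 + k2 = k) (N1 N2 : ℕ → ℕ)
    (hN1 : ∀ i, 1 ≤ i → i ≤ k → N1 (i + 1) ≤ N1 i)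
    (hN1z : ∀ i, k < i → N1 i = 0)
    (hN2 : ∀ i, 1 ≤ i → i < k → N2 i ≤ N2 (i + 1))
    (hN20 : N2 0 = 0) :
    Lfun k N1 N2 k1 k2 - Lfun k N1 N2 (k1 + 1) k2
      - Lfun k N1 N2 (k1 - 1) (k2 + 1) + Lfun k N1 N2 k1 (k2 + 1) =
    (∑ p ∈ Finset.univ.filter
        (fun p : Fin k → Fin 2 => onesCount k p = k1 + k2 ∧ ext' k p k = 1),
      lTerm k N1 p * deltaR k N1 p * lTerm k N2 (g1 k k1 p) *
        (1 - Polynomial.X ^ N2 (pos1 k (k2 + 1) p)))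
    + (∑ p ∈ Finset.univ.filter
        (fun p : Fin k → Fin 2 => onesCount k p = k1 + k2 ∧ ext' k p k = 0),
      lTerm k N1 p * deltaR k N1 p * (1 - Polynomial.X ^ N1 k) *
        lTerm k N2 (g1 k k1 p) *
        (1 - Polynomial.X ^ N2 (pos1 k (k2 + 1) p))) :=
  stmt14_general k k1 k2 h1 N1 N2 hN1
end
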